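/- arXiv:math/9912173 — 6 statements merged into one kernel-verified Lean document; each statement's English description precedes it below -/
import Mathlib

section
/- Let R be a commutative ring with invertible elements x, y, and let M₊ = !![1−x, −y; −x·y⁻¹, 0], M₋ = !![0, −x⁻¹·y; −y⁻¹, 1−x⁻¹]. Let n ≥ 1, let ε : Fin n → Bool assign a sign to each crossing, and let σ be a permutation of Fin n × Fin 2 with permutation matrix P (P has entry 1 at position ((i,a), σ(i,a)) and 0 elsewhere). For a 2×2 matrix B, let M(B) denote the 2n×2n block-diagonal matrix indexed by Fin n × Fin 2 whose diagonal block at index 0 is B and whose diagonal block at index i ≠ 0 is M₊ if ε(i) is true and M₋ otherwise. Then det(M(M₊) − P) − x · det(M(M₋) − P) = (1−x) · det(M(1₂) − P), where 1₂ is the 2×2 identity matrix. -/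
/-- The local crossing matrix assigned to a positive classical crossing in the
Jaeger–Kauffman–Saleur determinant model. -/
def Mpos {R : Type*} [CommRing R] (x y : Rˣ) : Matrix (Fin 2) (Fin 2) R :=
  !![1 - (x : R), -(y : R); -((x : R) * ((y⁻¹ : Rˣ) : R)), 0]

/-- The local crossing matrix assigned to a negative classical crossing. -/
def Mneg {R : Type*} [CommRing R] (x y : Rˣ) : Matrix (Fin 2) (Fin 2) R :=
  !![0, -(((x⁻¹ : Rˣ) : R) * (y : R)); -((y⁻¹ : Rˣ) : R), 1 - ((x⁻¹ : Rˣ) : R)]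

/-- The block-diagonal matrix indexed by `ι × Fin 2` whose diagonal `2×2` block at
index `i` is `blk i`. -/
def blockDiag {R : Type*} [CommRing R] {ι : Type*} [DecidableEq ι]
    (blk : ι → Matrix (Fin 2) (Fin 2) R) : Matrix (ι × Fin 2) (ι × Fin 2) R :=
  fun p q => if p.1 = q.1 then blk p.1 p.2 q.2 else 0

/-- The permutation matrix of `σ`: entry `1` at position `(p, σ p)` and `0` elsewhere. -/
def permMat (R : Type*) [CommRing R] {ι : Type*} [DecidableEq ι] (σ : Equiv.Perm ι) :
    Matrix ι ι R :=
  fun p q => if σ p = q then 1 else 0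


section Aux
variable {R : Type*} [CommRing R] {ι : Type*} [Fintype ι] [DecidableEq ι]

lemma updRow_comm (N : Matrix ι ι R) {p q : ι} (h : p ≠ q) (u v : ι → R) :
    (N.updateRow p u).updateRow q v = (N.updateRow q v).updateRow p u := by
  ext i j
  by_cases hip : i = p <;> by_cases hiq : i = q <;>
    simp_all [Matrix.updateRow_apply]

lemma det_updRow_swap (N : Matrix ι ι R) {p q : ι} (h : p ≠ q) (u v : ι → R) :
    ((N.updateRow p v).updateRow q u).det = -((N.updateRow p u).updateRow q v).det := by
  have key : (N.updateRow p v).updateRow q u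
      = ((N.updateRow p u).updateRow q v).submatrix (Equiv.swap p q) id := by
    ext i j
    by_cases hip : i = p <;> by_cases hiq : i = q <;>
      simp_all [Matrix.updateRow_apply, Matrix.submatrix, Equiv.swap_apply_of_ne_of_ne,
        Equiv.swap_apply_left, Equiv.swap_apply_right, h.symm]
  rw [key, Matrix.det_permute, Equiv.Perm.sign_swap h]
  push_cast
  ring

lemma det_two_rows_expand (N : Matrix ι ι R) {p q : ι} (h : p ≠ q)
    (a b c d : R) (u v w0 w1 : ι → R) :
    ((N.updateRow p (a • u + b • v + w0)).updateRow q (c • u + d • v + w1)).det =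
    (a * d - b * c) * ((N.updateRow p u).updateRow q v).det
      + a * ((N.updateRow p u).updateRow q w1).det
      + b * ((N.updateRow p v).updateRow q w1).det
      + c * ((N.updateRow p w0).updateRow q u).det
      + d * ((N.updateRow p w0).updateRow q v).det
      + ((N.updateRow p w0).updateRow q w1).det := by
  have expand_q : ∀ z : ι → R,
      ((N.updateRow p z).updateRow q (c • u + d • v + w1)).det
        = c * ((N.updateRow p z).updateRow q u).det
          + d * ((N.updateRow p z).updateRow q v).det
          + ((N.updateRow p z).updateRow q w1).det := by
    intro z
    rw [Matrix.det_updateRow_add, Matrix.det_updateRow_add, Matrix.det_updateRow_smul,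
      Matrix.det_updateRow_smul]
  have expand_p : ∀ z : ι → R,
      ((N.updateRow p (a • u + b • v + w0)).updateRow q z).det
        = a * ((N.updateRow p u).updateRow q z).det
          + b * ((N.updateRow p v).updateRow q z).det
          + ((N.updateRow p w0).updateRow q z).det := by
    intro z
    rw [updRow_comm N h, Matrix.det_updateRow_add, Matrix.det_updateRow_add,
      Matrix.det_updateRow_smul, Matrix.det_updateRow_smul,
      ← updRow_comm N h u z, ← updRow_comm N h v z, ← updRow_comm N h w0 z]
  rw [expand_q, expand_p u, expand_p v, expand_p w1]
  have z1 : ((N.updateRow p u).updateRow q u).det = 0 :=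
    Matrix.det_zero_of_row_eq h (by simp [Matrix.updateRow_apply, h, h.symm])
  have z2 : ((N.updateRow p v).updateRow q v).det = 0 :=
    Matrix.det_zero_of_row_eq h (by simp [Matrix.updateRow_apply, h, h.symm])
  have sw : ((N.updateRow p v).updateRow q u).det = -((N.updateRow p u).updateRow q v).det :=
    det_updRow_swap N h u v
  rw [z1, z2, sw]
  ring

end Aux

/-- The determinant identity underlying the Conway-type skein relation:
replacing the block at crossing `0` by `M₊`, `M₋`, or the identity matrix gives
`det(M(M₊) − P) − x · det(M(M₋) − P) = (1 − x) · det(M(1₂) − P)`. -/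
theorem det_skein {R : Type*} [CommRing R] (x y : Rˣ) (n : ℕ) (hn : 1 ≤ n)
    (ε : Fin n → Bool) (σ : Equiv.Perm (Fin n × Fin 2)) :
    let i0 : Fin n := ⟨0, hn⟩
    let blk : Matrix (Fin 2) (Fin 2) R → Fin n → Matrix (Fin 2) (Fin 2) R :=
      fun B i => if i = i0 then B else if ε i then Mpos x y else Mneg x y
    let P : Matrix (Fin n × Fin 2) (Fin n × Fin 2) R := permMat R σ
    (blockDiag (blk (Mpos x y)) - P).det - (x : R) * (blockDiag (blk (Mneg x y)) - P).det
      = (1 - (x : R)) * (blockDiag (blk 1) - P).det := by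
  intro i0 blk P
  classical
  set p0 : Fin n × Fin 2 := (i0, 0) with hp0
  set p1 : Fin n × Fin 2 := (i0, 1) with hp1
  have hp : p0 ≠ p1 := by simp [hp0, hp1, Prod.ext_iff]
  set e : Fin 2 → (Fin n × Fin 2 → R) := fun b q => if q = (i0, b) then 1 else 0 with he
  set w : Fin 2 → (Fin n × Fin 2 → R) := fun a q => -(P (i0, a) q) with hw
  have key : ∀ B : Matrix (Fin 2) (Fin 2) R,
      blockDiag (blk B) - P =
        ((blockDiag (blk 1) - P).updateRow p0 (B 0 0 • e 0 + B 0 1 • e 1 + w 0)).updateRow p1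
          (B 1 0 • e 0 + B 1 1 • e 1 + w 1) := by
    intro B
    ext q r
    obtain ⟨i, a⟩ := q
    obtain ⟨j, b⟩ := r
    by_cases hi : i = i0
    · subst hi
      by_cases hj : j = i0
      · subst hj
        fin_cases a <;> fin_cases b <;>
          simp [blockDiag, blk, Matrix.updateRow_apply, hp0, hp1, he, hw,
            Matrix.sub_apply, Prod.ext_iff, sub_eq_add_neg]
      · fin_cases a <;>
          simp [blockDiag, blk, Matrix.updateRow_apply, hp0, hp1, he, hw,
            Matrix.sub_apply, Prod.ext_iff, hj, Ne.symm hj, sub_eq_add_neg]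
    · have h0 : ((i, a) : Fin n × Fin 2) ≠ p0 := by simp [hp0, hi]
      have h1 : ((i, a) : Fin n × Fin 2) ≠ p1 := by simp [hp1, hi]
      simp [Matrix.updateRow_apply, h0, h1, Matrix.sub_apply, blockDiag, blk, hi]
  rw [key (Mpos x y), key (Mneg x y)]
  conv_rhs => rw [key 1]
  rw [det_two_rows_expand _ hp, det_two_rows_expand _ hp, det_two_rows_expand _ hp]
  have hx : (x : R) * ((x⁻¹ : Rˣ) : R) = 1 := x.mul_inv
  have hy : (y : R) * ((y⁻¹ : Rˣ) : R) = 1 := y.mul_inv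
  simp only [Mpos, Mneg, Matrix.cons_val', Matrix.cons_val_zero, Matrix.cons_val_one,
    Matrix.head_cons, Matrix.empty_val', Matrix.cons_val_fin_one, Matrix.head_fin_const,
    Matrix.one_apply_eq, Matrix.one_apply_ne, Matrix.one_apply, if_true, if_false]
  set D1 := (((blockDiag (blk 1) - P).updateRow p0 (e 0)).updateRow p1 (e 1)).det
  set D3 := (((blockDiag (blk 1) - P).updateRow p0 (e 1)).updateRow p1 (w 1)).det
  set D5 := (((blockDiag (blk 1) - P).updateRow p0 (w 0)).updateRow p1 (e 1)).det
  norm_num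
  linear_combination (D1 * ((y : R) * ((y⁻¹ : Rˣ) : R)) + (y : R) * D3 + D5) * hx
    + ((1 - (x : R)) * D1 - (x : R) * ((x⁻¹ : Rˣ) : R) * D1) * hy
end

section
/- Let R be a commutative ring with invertible elements x, y, and let M₊ = !![1−x, −y; −x·y⁻¹, 0], M₋ = !![0, −x⁻¹·y; −y⁻¹, 1−x⁻¹]. Let n ≥ 2, let ε : Fin n → Bool, and let σ be a permutation of Fin n × Fin 2 such that for each a, the image σ(0,a) does not lie in {0} × Fin 2 (no edge runs from crossing 0 back to crossing 0). Let M(1₂) be the 2n×2n block-diagonal matrix whose block at index 0 is the identity 1₂ and whose block at i ≠ 0 is M₊ or M₋ according to ε(i), and let P be the permutation matrix of σ. Define a permutation σ₀ of ({i : Fin n // i ≠ 0}) × Fin 2 by σ₀(i,a) = σ(0,b) if σ(i,a) = (0,b) for some b, and σ₀(i,a) = σ(i,a) otherwise; let M₀ be the 2(n−1)×2(n−1) block-diagonal matrix with blocks given by ε on the crossings i ≠ 0, and P₀ the permutation matrix of σ₀. Then det(M(1₂) − P) = det(M₀ − P₀). -/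
/-! Put the two half-edges of crossing `i₀` first. Since no edge joins `i₀` to itself, the
permutation matrix vanishes on the `i₀` diagonal block, so that block of `M(1) - P` is the
identity and the determinant is that of the Schur complement `D - C * B`. The entries of `C * B`
count the two-step paths `q → (i₀, a) → q'` of `σ`, so subtracting them from `D` glues every edge
entering `i₀` to the edge leaving `i₀` on the same side: `D - C * B = M₀ - P₀`. -/

open Equiv

section Smoothing

variable {ι κ : Type*}

def subtypeNeVal (i₀ : ι) (κ : Type*) : {i // i ≠ i₀} × κ → ι × κ :=
  Prod.map Subtype.val id

@[simp]
theorem subtypeNeVal_apply (i₀ : ι) (q : {i // i ≠ i₀} × κ) :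
    subtypeNeVal i₀ κ q = (q.1.1, q.2) :=
  rfl

theorem subtypeNeVal_injective (i₀ : ι) : Function.Injective (subtypeNeVal i₀ κ) :=
  Subtype.val_injective.prodMap Function.injective_id

variable [DecidableEq ι]

def Equiv.sumSubtypeNeProd (i₀ : ι) (κ : Type*) : κ ⊕ ({i // i ≠ i₀} × κ) ≃ ι × κ where
  toFun := Sum.elim (i₀, ·) (subtypeNeVal i₀ κ)
  invFun p := if h : p.1 = i₀ then .inl p.2 else .inr (⟨p.1, h⟩, p.2)
  left_inv := by
    rintro (a | ⟨⟨i, hi⟩, a⟩)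
    · simp
    · simp [hi]
  right_inv := by
    rintro ⟨i, a⟩
    by_cases h : i = i₀ <;> simp [h]

variable {R : Type*} [CommRing R]

theorem blockDiag_comp_apply {ι' : Type*} [DecidableEq ι'] {f : ι' → ι}
    (hf : Function.Injective f) (blk : ι → Matrix (Fin 2) (Fin 2) R) (p q : ι' × Fin 2) :
    blockDiag (blk ∘ f) p q = blockDiag blk (Prod.map f id p) (Prod.map f id q) := by
  simp [blockDiag, hf.eq_iff]

variable [Fintype κ] [DecidableEq κ]

theorem sum_permMat_mul_permMat_apply (σ : Perm (ι × κ)) (i₀ : ι) (p q : ι × κ) :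
    ∑ a, permMat R σ p (i₀, a) * permMat R σ (i₀, a) q =
      if (σ p).1 = i₀ ∧ σ (σ p) = q then 1 else 0 := by
  by_cases hp : (σ p).1 = i₀
  · obtain ⟨b, hb⟩ : ∃ b, σ p = (i₀, b) := ⟨_, Prod.ext hp rfl⟩
    simp only [permMat, hb, Prod.mk.injEq, true_and, boole_mul, Finset.sum_ite_eq,
      Finset.mem_univ, if_true]
  · have (a : κ) : σ p ≠ (i₀, a) := fun h => hp (by rw [h])
    simp [permMat, hp, this]

theorem permMat_smoothed_apply (σ : Perm (ι × κ)) (i₀ : ι) (σ₀ : Perm ({i // i ≠ i₀} × κ))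
    (hσ₀ : ∀ q, subtypeNeVal i₀ κ (σ₀ q) =
      if (σ (subtypeNeVal i₀ κ q)).1 = i₀ then σ (σ (subtypeNeVal i₀ κ q))
      else σ (subtypeNeVal i₀ κ q))
    (q q' : {i // i ≠ i₀} × κ) :
    permMat R σ₀ q q' = permMat R σ (subtypeNeVal i₀ κ q) (subtypeNeVal i₀ κ q') +
      ∑ a, permMat R σ (subtypeNeVal i₀ κ q) (i₀, a) *
        permMat R σ (i₀, a) (subtypeNeVal i₀ κ q') := by
  rw [sum_permMat_mul_permMat_apply]
  simp only [permMat, ← (subtypeNeVal_injective i₀).eq_iff (a := σ₀ q), hσ₀]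
  have := q'.1.2
  split_ifs <;> simp_all

variable [Fintype ι]

theorem Matrix.det_eq_det_schur_of_submatrix_eq_one (A : Matrix (ι × κ) (ι × κ) R) (i₀ : ι)
    (hA : A.submatrix (i₀, ·) (i₀, ·) = 1) :
    A.det = (A.submatrix (subtypeNeVal i₀ κ) (subtypeNeVal i₀ κ) -
      A.submatrix (subtypeNeVal i₀ κ) (i₀, ·) * A.submatrix (i₀, ·) (subtypeNeVal i₀ κ)).det := by
  let e := Equiv.sumSubtypeNeProd i₀ κ
  have h₁₁ : (A.submatrix e e).toBlocks₁₁ = 1 := hA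
  rw [← Matrix.det_submatrix_equiv_self e, ← Matrix.fromBlocks_toBlocks (A.submatrix e e), h₁₁,
    Matrix.det_fromBlocks_one₁₁]
  rfl

theorem det_blockDiag_sub_permMat_eq_det_smoothed (blk : ι → Matrix (Fin 2) (Fin 2) R) (i₀ : ι)
    (hblk : blk i₀ = 1) (σ : Perm (ι × Fin 2)) (hσ : ∀ a, (σ (i₀, a)).1 ≠ i₀)
    (σ₀ : Perm ({i // i ≠ i₀} × Fin 2))
    (hσ₀ : ∀ q, subtypeNeVal i₀ _ (σ₀ q) =
      if (σ (subtypeNeVal i₀ _ q)).1 = i₀ then σ (σ (subtypeNeVal i₀ _ q))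
      else σ (subtypeNeVal i₀ _ q)) :
    (blockDiag blk - permMat R σ).det =
      (blockDiag (fun i : {i // i ≠ i₀} => blk i) - permMat R σ₀).det := by
  have hcorner : (blockDiag blk - permMat R σ).submatrix (i₀, ·) (i₀, ·) = 1 := by
    ext a b
    have hab : σ (i₀, a) ≠ (i₀, b) := fun h => hσ a (by rw [h])
    simp [blockDiag, permMat, hblk, hab]
  have hleft : (blockDiag blk - permMat R σ).submatrix (subtypeNeVal i₀ _) (i₀, ·) =
      -(permMat R σ).submatrix (subtypeNeVal i₀ _) (i₀, ·) := by
    ext q a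
    simp [blockDiag, q.1.2]
  have hright : (blockDiag blk - permMat R σ).submatrix (i₀, ·) (subtypeNeVal i₀ _) =
      -(permMat R σ).submatrix (i₀, ·) (subtypeNeVal i₀ _) := by
    ext a q
    simp [blockDiag, Ne.symm q.1.2]
  rw [Matrix.det_eq_det_schur_of_submatrix_eq_one _ i₀ hcorner, hleft, hright, Matrix.neg_mul,
    Matrix.mul_neg, neg_neg]
  congr 1
  ext q q'
  rw [Matrix.sub_apply, Matrix.sub_apply, Matrix.mul_apply, Matrix.submatrix_apply,
    Matrix.sub_apply, permMat_smoothed_apply σ i₀ σ₀ hσ₀, ← Function.comp_def blk Subtype.val,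
    blockDiag_comp_apply Subtype.val_injective]
  simp only [Matrix.submatrix_apply, subtypeNeVal]
  ring

end Smoothing

/-- Smoothing the crossing `0`: if no edge runs from crossing `0` back to itself, the
determinant with the identity block at crossing `0` equals the determinant of the
smoothed configuration on the remaining crossings. -/
theorem det_identityBlock_eq_det_smoothed {R : Type*} [CommRing R] (x y : Rˣ)
    (n : ℕ) (hn : 2 ≤ n) (ε : Fin n → Bool) (σ : Equiv.Perm (Fin n × Fin 2)) :
    let i0 : Fin n := ⟨0, by omega⟩
    ∀ (_ : ∀ a : Fin 2, (σ (i0, a)).1 ≠ i0)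
      (σ₀ : Equiv.Perm ({i : Fin n // i ≠ i0} × Fin 2))
      (_ : ∀ (i : Fin n) (hi : i ≠ i0) (a : Fin 2),
        ((σ₀ (⟨i, hi⟩, a)).1.1, (σ₀ (⟨i, hi⟩, a)).2) =
          if (σ (i, a)).1 = i0 then σ (i0, (σ (i, a)).2) else σ (i, a)),
    (blockDiag (fun i => if i = i0 then 1 else if ε i then Mpos x y else Mneg x y)
        - permMat R σ).det
      = (blockDiag (fun i : {i : Fin n // i ≠ i0} => if ε i.1 then Mpos x y else Mneg x y)
        - permMat R σ₀).det := by
  intro i0 hσ σ₀ hσ₀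
  have hsmooth : ∀ q, subtypeNeVal i0 _ (σ₀ q) =
      if (σ (subtypeNeVal i0 _ q)).1 = i0 then σ (σ (subtypeNeVal i0 _ q))
      else σ (subtypeNeVal i0 _ q) := by
    rintro ⟨⟨i, hi⟩, a⟩
    by_cases h : (σ (i, a)).1 = i0
    · have hσi : (i0, (σ (i, a)).2) = σ (i, a) := Prod.ext h.symm rfl
      simp [hσ₀ i hi a, h, hσi]
    · simp [hσ₀ i hi a, h]
  rw [det_blockDiag_sub_permMat_eq_det_smoothed _ i0 (if_pos rfl) σ hσ σ₀ hsmooth]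
  congr 3
  funext i
  exact if_neg i.2
end

section
/- Let R be a commutative ring and x an invertible element of R, and set y = −x. Let n ≥ 1, ε : Fin n → Bool, and σ a permutation of Fin n × Fin 2 with permutation matrix P. Let M be the 2n×2n block-diagonal matrix indexed by Fin n × Fin 2 whose i-th diagonal block is M₊ = !![1−x, −y; −x·y⁻¹, 0] if ε(i) is true and M₋ = !![0, −x⁻¹·y; −y⁻¹, 1−x⁻¹] otherwise. Then det(M − P) = 0. -/
lemma row_sum_one {R : Type*} [CommRing R] (x y : Rˣ) (hy : y = -x) (b : Bool) (k : Fin 2) :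
    (∑ j : Fin 2, (if b then Mpos x y else Mneg x y) k j) = 1 := by
  subst hy
  have hinv : ((-x)⁻¹ : Rˣ) = -x⁻¹ := by simp
  cases b <;> fin_cases k <;>
    simp [Mpos, Mneg, Fin.sum_univ_two, hinv, Units.val_neg, mul_comm]

/-- Theorem 5(a) of the paper: when `y = −x`, the determinant `det(M − P)` vanishes,
i.e. `Z_D(x, −x) = 0` for every virtual link diagram. -/
theorem det_eq_zero_of_y_eq_neg_x {R : Type*} [CommRing R] (x y : Rˣ) (hy : y = -x)
    (n : ℕ) (hn : 1 ≤ n) (ε : Fin n → Bool) (σ : Equiv.Perm (Fin n × Fin 2)) :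
    (blockDiag (fun i => if ε i then Mpos x y else Mneg x y) - permMat R σ).det = 0 := by
  set A := blockDiag (fun i => if ε i then Mpos x y else Mneg x y) - permMat R σ with hA
  have hv : A.mulVec (fun _ => (1 : R)) = 0 := by
    funext p
    have h1 : ∑ q : Fin n × Fin 2,
        (blockDiag (fun i => if ε i then Mpos x y else Mneg x y)) p q = 1 := by
      rw [Fintype.sum_prod_type]
      rw [Finset.sum_eq_single p.1]
      · simpa [blockDiag] using row_sum_one x y hy (ε p.1) p.2
      · intro i _ hi
        simp [blockDiag, Ne.symm hi]
      · simp
    have h2 : ∑ q : Fin n × Fin 2, permMat R σ p q = 1 := by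
      simp [permMat]
    simp only [Matrix.mulVec, dotProduct, mul_one, Pi.zero_apply, hA,
      Matrix.sub_apply, Finset.sum_sub_distrib, h1, h2, sub_self]
  have hadj := congrArg (fun v => (Matrix.adjugate A).mulVec v) hv
  simp only [Matrix.mulVec_mulVec, Matrix.adjugate_mul, Matrix.mulVec_zero] at hadj
  have := congrFun hadj (⟨⟨0, hn⟩, 0⟩ : Fin n × Fin 2)
  simpa [Matrix.mulVec, dotProduct, Matrix.smul_apply, Matrix.one_apply,
    Finset.sum_ite_eq'] using this
end

section
/- Let R be a commutative ring and x an invertible element of R, and set y = −1. Let n ≥ 1, ε : Fin n → Bool, and σ a permutation of Fin n × Fin 2 with permutation matrix P. Let M be the 2n×2n block-diagonal matrix indexed by Fin n × Fin 2 whose i-th diagonal block is M₊ = !![1−x, −y; −x·y⁻¹, 0] if ε(i) is true and M₋ = !![0, −x⁻¹·y; −y⁻¹, 1−x⁻¹] otherwise. Then det(M − P) = 0. -/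
/-- Theorem 5(b) of the paper: when `y = −1`, the determinant `det(M − P)` vanishes,
i.e. `Z_D(x, −1) = 0` for every virtual link diagram. -/
theorem det_eq_zero_of_y_eq_neg_one {R : Type*} [CommRing R] (x y : Rˣ) (hy : y = -1)
    (n : ℕ) (hn : 1 ≤ n) (ε : Fin n → Bool) (σ : Equiv.Perm (Fin n × Fin 2)) :
    (blockDiag (fun i => if ε i then Mpos x y else Mneg x y) - permMat R σ).det = 0 := by
  subst hy
  set A := blockDiag (fun i => if ε i then Mpos x (-1) else Mneg x (-1)) - permMat R σ with hA
  have hblk : ∀ (i : Fin n) (c : Fin 2),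
      ∑ r : Fin 2, (if ε i then Mpos x (-1) else Mneg x (-1)) r c = 1 := by
    intro i c
    have hx : (x : R) * ((x⁻¹ : Rˣ) : R) = 1 := by
      rw [← Units.val_mul, mul_inv_cancel, Units.val_one]
    have hx' : ((x⁻¹ : Rˣ) : R) * (x : R) = 1 := by
      rw [← Units.val_mul, inv_mul_cancel, Units.val_one]
    by_cases h : ε i <;> fin_cases c <;>
      simp [h, Mpos, Mneg, Fin.sum_univ_two, hx, hx']
  have hcol : ∀ q : Fin n × Fin 2, ∑ p, A p q = 0 := by
    intro q
    have h1 : ∑ p, blockDiag (fun i => if ε i then Mpos x (-1) else Mneg x (-1)) p q = 1 := by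
      rw [Fintype.sum_prod_type]
      rw [Finset.sum_eq_single q.1]
      · simpa [blockDiag] using hblk q.1 q.2
      · intro i _ hi
        simp [blockDiag, hi]
      · simp
    have h2 : ∑ p, permMat R σ p q = 1 := by
      rw [Finset.sum_eq_single (σ⁻¹ q)]
      · simp [permMat]
      · intro p _ hp
        have : σ p ≠ q := fun h => hp (by simp [← h])
        simp [permMat, this]
      · simp
    simp [hA, Matrix.sub_apply, Finset.sum_sub_distrib, h1, h2]
  have hmv : A.transpose.mulVec (fun _ => (1 : R)) = 0 := by
    funext q
    simpa [Matrix.mulVec, Matrix.transpose_apply, dotProduct] using hcol q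
  have h3 : A.transpose.adjugate.mulVec (A.transpose.mulVec (fun _ => (1 : R))) = 0 := by
    rw [hmv, Matrix.mulVec_zero]
  rw [Matrix.mulVec_mulVec, Matrix.adjugate_mul] at h3
  have h4 := congrFun h3 (⟨0, hn⟩, 0)
  simpa [Matrix.smul_mulVec, Matrix.mulVec, dotProduct, Matrix.one_apply,
    Matrix.det_transpose] using h4
end

section
/- Let R be a commutative ring with invertible elements x, y, and let M₊ = !![1−x, −y; −x·y⁻¹, 0], M₋ = !![0, −x⁻¹·y; −y⁻¹, 1−x⁻¹]. Let n ≥ 1, ε : Fin n → Bool, σ a permutation of Fin n × Fin 2 with block-diagonal matrix M and permutation matrix P. Fix two distinct indices (i,a) ≠ (j,b) in Fin n × Fin 2. On Fin (n+2) × Fin 2 (adjoining two new crossings c₁, c₂, with ε'(c₁) = true, i.e. positive, and ε'(c₂) = false, i.e. negative, and ε' = ε on old crossings) define the permutation σ' by: σ'(i,a) = (c₁,0), σ'(c₁,0) = (c₂,0), σ'(c₂,0) = σ(i,a), σ'(j,b) = (c₁,1), σ'(c₁,1) = (c₂,1), σ'(c₂,1) = σ(j,b), and σ' = σ on all other indices.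 Let M' and P' be the corresponding block-diagonal matrix and permutation matrix on Fin (n+2) × Fin 2. Then det(M' − P') = det(M − P). -/
/-!
Put the four half-edges of the two new crossings last. The new diagonal block is
`T = [[M₊, -1], [0, M₋]]`, the `-1` recording that both strands run from the first new
crossing straight into the second. Since `M₊ M₋ = 1`, `T` has determinant `det (M₊ M₋) = 1`
and inverse `[[M₋, 1], [0, M₊]]`. In the old block the two re-routed rows have lost their
entries of `P`; the Schur correction `C T⁻¹ D` through the off-diagonal blocks only sees the
identity corner of `T⁻¹` and restores exactly these entries, so the Schur complement of `T`
is the old `M - P`.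
-/

namespace ReidemeisterII

open Matrix

variable {R : Type*} [CommRing R]

theorem permMat_submatrix_equiv {α β : Type*} [DecidableEq α] [DecidableEq β]
    (σ : Equiv.Perm β) (e : α ≃ β) :
    (permMat R σ).submatrix e e = permMat R (e.symm.permCongr σ) := by
  ext p q
  simp [permMat, Equiv.symm_apply_eq]

theorem Mpos_mul_Mneg (x y : Rˣ) : Mpos x y * Mneg x y = (1 : Matrix (Fin 2) (Fin 2) R) := by
  have hx : (x : R) * ((x⁻¹ : Rˣ) : R) = 1 := x.mul_inv
  have hy : (y : R) * ((y⁻¹ : Rˣ) : R) = 1 := y.mul_inv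
  ext i j
  fin_cases i <;> fin_cases j <;> simp [Mpos, Mneg, Matrix.mul_apply, Fin.sum_univ_two]
  · linear_combination (y : R) * hx
  · linear_combination (y : R) * ((y⁻¹ : Rˣ) : R) * hx + hy

section Splice

variable {ι κ : Type*}

/-- `τ` reroutes the strands leaving the half-edges `u k` of `σ` through two new crossings,
first the left copy of `κ`, then the right one. -/
structure IsSplice (σ : Equiv.Perm ι) (u : κ → ι) (τ : Equiv.Perm (ι ⊕ (κ ⊕ κ))) :
    Prop where
  enter : ∀ k, τ (.inl (u k)) = .inr (.inl k)
  pass : ∀ k, τ (.inr (.inl k)) = .inr (.inr k)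
  leave : ∀ k, τ (.inr (.inr k)) = .inl (σ (u k))
  apply_of_forall_ne : ∀ p, (∀ k, u k ≠ p) → τ (.inl p) = .inl (σ p)

variable [DecidableEq ι] [Fintype κ] [DecidableEq κ]
  {σ : Equiv.Perm ι} {u : κ → ι} {τ : Equiv.Perm (ι ⊕ (κ ⊕ κ))}

theorem IsSplice.permMat_eq_fromBlocks (hτ : IsSplice σ u τ) (hu : Function.Injective u) :
    permMat R τ =
      fromBlocks
        (permMat R σ - (1 : Matrix ι ι R).submatrix id u * (permMat R σ).submatrix u id)
        (fromCols ((1 : Matrix ι ι R).submatrix id u) 0)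
        (fromRows 0 ((permMat R σ).submatrix u id)) (fromBlocks 0 1 0 0) := by
  ext (p | k | k) (q | l | l)
  · simp only [fromBlocks_apply₁₁, Matrix.sub_apply, mul_apply, submatrix_apply, id, one_apply,
      ite_mul, one_mul, zero_mul]
    by_cases hp : ∃ k, u k = p
    · obtain ⟨k, rfl⟩ := hp
      simp [permMat, hτ.enter, hu.eq_iff]
    · push Not at hp
      simp [permMat, hτ.apply_of_forall_ne p hp, Ne.symm (hp _)]
  · simp only [permMat, fromBlocks_apply₁₂, fromCols_apply_inl, submatrix_apply, id, one_apply]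
    simp [← hτ.enter]
  · simp only [permMat, fromBlocks_apply₁₂, fromCols_apply_inr, Matrix.zero_apply]
    simp [← hτ.pass]
  all_goals simp [permMat, hτ.pass, hτ.leave, one_apply]

theorem IsSplice.det_fromBlocks_sub_permMat [Fintype ι] (hτ : IsSplice σ u τ)
    (hu : Function.Injective u) (A : Matrix ι ι R) {X Y : Matrix κ κ R} (hXY : X * Y = 1) :
    (fromBlocks A 0 0 (fromBlocks X 0 0 Y) - permMat R τ).det = (A - permMat R σ).det := by
  rw [hτ.permMat_eq_fromBlocks hu]
  set U : Matrix ι κ R := (1 : Matrix ι ι R).submatrix id u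
  set V : Matrix κ ι R := (permMat R σ).submatrix u id
  set C : Matrix ι (κ ⊕ κ) R := fromCols (-U) 0
  set D : Matrix (κ ⊕ κ) ι R := fromRows 0 (-V)
  have hYX : Y * X = 1 := mul_eq_one_comm.mp hXY
  let _ : Invertible (fromBlocks X (-1) 0 Y) := ⟨fromBlocks Y 1 0 X,
    by simp [fromBlocks_multiply, hXY, hYX], by simp [fromBlocks_multiply, hXY, hYX]⟩
  have hblocks : fromBlocks A 0 0 (fromBlocks X 0 0 Y) -
      fromBlocks (permMat R σ - U * V) (fromCols U 0) (fromRows 0 V) (fromBlocks 0 1 0 0) =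
      fromBlocks (A - permMat R σ + U * V) C D (fromBlocks X (-1) 0 Y) := by
    rw [sub_eq_add_neg, fromBlocks_neg, fromBlocks_add, fromBlocks_neg, fromBlocks_add]
    congr 1
    · abel
    all_goals simp [C, D, fromCols_neg, fromRows_neg]
  have hdet : (fromBlocks X (-1) 0 Y).det = 1 := by
    rw [det_fromBlocks_zero₂₁, ← det_mul, hXY, det_one]
  have hschur : C * ⅟(fromBlocks X (-1) 0 Y) * D = U * V := by
    change fromCols (-U) 0 * fromBlocks Y 1 0 X * fromRows 0 (-V) = U * V
    simp [fromCols_mul_fromBlocks, fromCols_mul_fromRows]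
  rw [hblocks, det_fromBlocks₂₂, hdet, hschur, add_sub_cancel_right, one_mul]

end Splice

def spliceEquiv (n : ℕ) : (Fin n × Fin 2) ⊕ (Fin 2 ⊕ Fin 2) ≃ Fin (n + 2) × Fin 2 :=
  (Equiv.sumCongr (Equiv.refl _)
      ((Equiv.boolProdEquivSum (Fin 2)).symm.trans
        (finTwoEquiv.symm.prodCongr (Equiv.refl _)))).trans
    ((Equiv.sumProdDistrib _ _ _).symm.trans (finSumFinEquiv.prodCongr (Equiv.refl _)))

variable {n : ℕ}

@[simp]
theorem spliceEquiv_inl (p : Fin n × Fin 2) :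
    spliceEquiv n (.inl p) = (Fin.castAdd 2 p.1, p.2) := by
  simp [spliceEquiv]

@[simp]
theorem spliceEquiv_inr_inl (k : Fin 2) :
    spliceEquiv n (.inr (.inl k)) = (⟨n, Nat.lt_add_of_pos_right two_pos⟩, k) := by
  simp [spliceEquiv, Equiv.boolProdEquivSum, finTwoEquiv, Fin.ext_iff]

@[simp]
theorem spliceEquiv_inr_inr (k : Fin 2) :
    spliceEquiv n (.inr (.inr k)) = (⟨n + 1, (n + 1).lt_succ_self⟩, k) := by
  simp [spliceEquiv, Equiv.boolProdEquivSum, finTwoEquiv, Fin.ext_iff]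

theorem blockDiag_submatrix_spliceEquiv (b : Fin (n + 2) → Matrix (Fin 2) (Fin 2) R) :
    (blockDiag b).submatrix (spliceEquiv n) (spliceEquiv n) =
      fromBlocks (blockDiag fun i => b (Fin.castAdd 2 i)) 0 0
        (fromBlocks (b ⟨n, Nat.lt_add_of_pos_right two_pos⟩) 0 0
          (b ⟨n + 1, (n + 1).lt_succ_self⟩)) := by
  ext (p | k | k) (q | l | l) <;> simp [_root_.blockDiag, Fin.ext_iff] <;> omega

end ReidemeisterII

open ReidemeisterII Matrix in
/-- Invariance of `det(M − P)` under Reidemeister move II: inserting one positive and one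
negative crossing `c₁ = n`, `c₂ = n+1` through which the two strands at `(i,a)` and `(j,b)`
pass (one on the left side of both new crossings, the other on the right) does not change
the determinant. -/
theorem det_reidemeister_II {R : Type*} [CommRing R] (x y : Rˣ)
    (n : ℕ) (ε : Fin n → Bool) (σ : Equiv.Perm (Fin n × Fin 2))
    (ia jb : Fin n × Fin 2) (hij : ia ≠ jb)
    (ε' : Fin (n + 2) → Bool)
    (hε'old : ∀ i : Fin n, ε' (Fin.castAdd 2 i) = ε i)
    (hε'c₁ : ε' ⟨n, by omega⟩ = true)
    (hε'c₂ : ε' ⟨n + 1, by omega⟩ = false)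
    (σ' : Equiv.Perm (Fin (n + 2) × Fin 2))
    (h1 : σ' (Fin.castAdd 2 ia.1, ia.2) = (⟨n, by omega⟩, 0))
    (h2 : σ' (⟨n, by omega⟩, 0) = (⟨n + 1, by omega⟩, 0))
    (h3 : σ' (⟨n + 1, by omega⟩, 0) = (Fin.castAdd 2 (σ ia).1, (σ ia).2))
    (h4 : σ' (Fin.castAdd 2 jb.1, jb.2) = (⟨n, by omega⟩, 1))
    (h5 : σ' (⟨n, by omega⟩, 1) = (⟨n + 1, by omega⟩, 1))
    (h6 : σ' (⟨n + 1, by omega⟩, 1) = (Fin.castAdd 2 (σ jb).1, (σ jb).2))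
    (h7 : ∀ p : Fin n × Fin 2, p ≠ ia → p ≠ jb →
      σ' (Fin.castAdd 2 p.1, p.2) = (Fin.castAdd 2 (σ p).1, (σ p).2)) :
    (blockDiag (fun i => if ε' i then Mpos x y else Mneg x y) - permMat R σ').det
      = (blockDiag (fun i => if ε i then Mpos x y else Mneg x y) - permMat R σ).det := by
  rw [← det_submatrix_equiv_self (spliceEquiv n), submatrix_sub, Pi.sub_apply, Pi.sub_apply,
    blockDiag_submatrix_spliceEquiv, permMat_submatrix_equiv]
  simp only [hε'old, hε'c₁, hε'c₂, if_true, Bool.false_eq_true, if_false]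
  have hsplice : IsSplice σ ![ia, jb] ((spliceEquiv n).symm.permCongr σ') := by
    constructor
    all_goals simp only [Fin.forall_fin_two, Equiv.permCongr_apply, Equiv.symm_symm,
      Equiv.symm_apply_eq]
    · simp [h1, h4]
    · simp [h2, h5]
    · simp [h3, h6]
    · rintro p ⟨hpi, hpj⟩
      simp [h7 p hpi.symm hpj.symm]
  exact hsplice.det_fromBlocks_sub_permMat (injective_pair_iff_ne.mpr hij) _ (Mpos_mul_Mneg x y)
end

section
/- Let R be a commutative ring with invertible elements x, y, and let M₊ = !![1−x, −y; −x·y⁻¹, 0], M₋ = !![0, −x⁻¹·y; −y⁻¹, 1−x⁻¹]. Let n ≥ 1, ε : Fin n → Bool, σ a permutation of Fin n × Fin 2 with block-diagonal matrix M and permutation matrix P. Fix an index (i,a) in Fin n × Fin 2, a sign s ∈ Bool for a new crossing c, and a side t ∈ Fin 2 for a loop at c; let t' be the other side. On Fin (n+1) × Fin 2 define σ' by σ'(c,t) = (c,t), σ'(i,a) = (c,t'), σ'(c,t') = σ(i,a), and σ' = σ elsewhere, with ε'(c) = s and ε' = ε on old crossings; let M', P' be the corresponding block-diagonal and permutation matrices.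 Then det(M' − P') = κ · det(M − P), where κ = −x if s is positive and t = 0 (left loop), κ = −1 if s is positive and t = 1 (right loop), κ = −1 if s is negative and t = 0, and κ = −x⁻¹ if s is negative and t = 1. -/
open Matrix hiding blockDiag

section

variable {R : Type*} [CommRing R]

theorem det_sub_single_self_of_det_sub_one_eq_zero {N : Matrix (Fin 2) (Fin 2) R}
    (hN : (N - 1).det = 0) (t : Fin 2) : (N - single t t 1).det = N t t - 1 := by
  rw [det_fin_two] at hN ⊢
  fin_cases t <;> simp [one_apply] at hN ⊢ <;> linear_combination hN

theorem adjugate_fin_two_apply_self_of_ne (E : Matrix (Fin 2) (Fin 2) R) {a b : Fin 2}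
    (hab : b ≠ a) : adjugate E b b = E a a := by
  fin_cases a <;> fin_cases b <;> simp_all [adjugate_fin_two]

theorem det_fromBlocks_add_single {ι : Type*} [Fintype ι] [DecidableEq ι] (A : Matrix ι ι R)
    (p q : ι) {a b : Fin 2} (hab : b ≠ a) (E : Matrix (Fin 2) (Fin 2) R)
    (hdet : E.det = E a a) (hunit : IsUnit (E a a)) :
    (fromBlocks (A + single p q 1) (-single p b 1) (-single b q 1) E).det = E a a * A.det := by
  have : Invertible E := E.invertibleOfIsUnitDet (hdet ▸ hunit)
  have hinv : (⅟E) b b = 1 := by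
    rw [invOf_eq_nonsing_inv, Matrix.inv_def, Matrix.smul_apply,
      adjugate_fin_two_apply_self_of_ne E hab, hdet, smul_eq_mul, Ring.inverse_mul_cancel _ hunit]
  rw [det_fromBlocks₂₂, hdet, Matrix.neg_mul, Matrix.mul_neg, Matrix.neg_mul, neg_neg,
    single_mul_mul_single, hinv, one_mul, one_mul, add_sub_cancel_right]

theorem det_Mpos_sub_one (x y : Rˣ) : (Mpos x y - 1).det = 0 := by
  simp [Mpos, det_fin_two, one_apply]
  linear_combination -(x : R) * y.mul_inv

theorem det_Mneg_sub_one (x y : Rˣ) : (Mneg x y - 1).det = 0 := by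
  simp [Mneg, det_fin_two, one_apply]

def halfEdgeSumEquiv (n : ℕ) : (Fin n × Fin 2) ⊕ Fin 2 ≃ Fin (n + 1) × Fin 2 where
  toFun := Sum.elim (fun p => (p.1.castSucc, p.2)) (fun j => (Fin.last n, j))
  invFun q := Fin.lastCases (Sum.inr q.2) (fun i => Sum.inl (i, q.2)) q.1
  left_inv := by rintro (⟨i, a⟩ | j) <;> simp
  right_inv := by
    rintro ⟨i, a⟩
    induction i using Fin.lastCases <;> simp

theorem blockDiag_submatrix_halfEdgeSumEquiv {n : ℕ}
    (blk : Fin (n + 1) → Matrix (Fin 2) (Fin 2) R) :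
    (blockDiag blk).submatrix (halfEdgeSumEquiv n) (halfEdgeSumEquiv n)
      = fromBlocks (blockDiag fun i => blk i.castSucc) 0 0 (blk (Fin.last n)) := by
  ext (⟨i, a⟩ | a) (⟨j, b⟩ | b) <;>
    simp [blockDiag, halfEdgeSumEquiv, Fin.castSucc_ne_last, (Fin.castSucc_ne_last _).symm]

theorem permMat_submatrix {α β : Type*} [DecidableEq α] [DecidableEq β] (π : Equiv.Perm β)
    (e : α ≃ β) : (permMat R π).submatrix e e = permMat R (e.symm.permCongr π) := by
  ext u v
  simp [permMat, Equiv.permCongr_apply, Equiv.symm_apply_eq]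

theorem permMat_eq_fromBlocks_of_kink {ι : Type*} [DecidableEq ι] (σ : Equiv.Perm ι)
    (τ : Equiv.Perm (ι ⊕ Fin 2)) (p : ι) {t t' : Fin 2} (htt' : t' ≠ t)
    (h1 : τ (.inr t) = .inr t) (h2 : τ (.inl p) = .inr t') (h3 : τ (.inr t') = .inl (σ p))
    (h4 : ∀ q, q ≠ p → τ (.inl q) = .inl (σ q)) :
    permMat R τ = fromBlocks (permMat R σ - single p (σ p) 1) (single p t' 1)
      (single t' (σ p) 1) (single t t 1) := by
  have hside : ∀ j : Fin 2, j = t ∨ j = t' := by omega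
  ext (q | j) (r | k)
  · by_cases hq : q = p
    · subst hq
      simp [permMat, h2, single_apply]
    · simp [permMat, h4 q hq, Ne.symm hq]
  · by_cases hq : q = p
    · subst hq
      simp [permMat, h2, single_apply]
    · simp [permMat, h4 q hq, Ne.symm hq]
  · rcases hside j with rfl | rfl
    · simp [permMat, h1, htt']
    · simp [permMat, h3, single_apply]
  · rcases hside j with rfl | rfl
    · simp [permMat, h1, single_apply]
    · simp [permMat, h3, htt'.symm]

end

theorem det_reidemeister_I_general {R : Type*} [CommRing R] (x y : Rˣ)
    (n : ℕ) (ε : Fin n → Bool) (σ : Equiv.Perm (Fin n × Fin 2))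
    (ia : Fin n × Fin 2) (s : Bool) (t t' : Fin 2) (htt' : t' ≠ t)
    (ε' : Fin (n + 1) → Bool)
    (hε'old : ∀ i : Fin n, ε' i.castSucc = ε i)
    (hε'c : ε' (Fin.last n) = s)
    (σ' : Equiv.Perm (Fin (n + 1) × Fin 2))
    (h1 : σ' (Fin.last n, t) = (Fin.last n, t))
    (h2 : σ' (ia.1.castSucc, ia.2) = (Fin.last n, t'))
    (h3 : σ' (Fin.last n, t') = ((σ ia).1.castSucc, (σ ia).2))
    (h4 : ∀ p : Fin n × Fin 2, p ≠ ia →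
      σ' (p.1.castSucc, p.2) = ((σ p).1.castSucc, (σ p).2)) :
    (blockDiag (fun i => if ε' i then Mpos x y else Mneg x y) - permMat R σ').det
      = (if s then (if t = 0 then -(x : R) else -1)
          else (if t = 0 then -1 else -((x⁻¹ : Rˣ) : R)))
        * (blockDiag (fun i => if ε i then Mpos x y else Mneg x y) - permMat R σ).det := by
  set e := halfEdgeSumEquiv n
  set Mc := if s then Mpos x y else Mneg x y
  set E := Mc - single t t 1 with hE
  have hκ : (if s then (if t = 0 then -(x : R) else -1)
      else (if t = 0 then -1 else -((x⁻¹ : Rˣ) : R))) = E t t := by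
    cases s <;> fin_cases t <;> simp [E, Mc, Mpos, Mneg]
  have hunit : IsUnit (E t t) := by
    rw [← hκ]
    split_ifs <;> simp
  have hdet : E.det = E t t := by
    have hMc : (Mc - 1).det = 0 := by
      cases s
      exacts [det_Mneg_sub_one x y, det_Mpos_sub_one x y]
    simp [E, det_sub_single_self_of_det_sub_one_eq_zero hMc]
  have hblk : (blockDiag fun i => if ε' i then Mpos x y else Mneg x y).submatrix e e
      = fromBlocks (blockDiag fun i => if ε i then Mpos x y else Mneg x y) 0 0 Mc := by
    simp only [e, blockDiag_submatrix_halfEdgeSumEquiv, hε'old, hε'c, Mc]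
  have hperm : (permMat R σ').submatrix e e = fromBlocks (permMat R σ - single ia (σ ia) 1)
      (single ia t' 1) (single t' (σ ia) 1) (single t t 1) := by
    rw [permMat_submatrix]
    exact permMat_eq_fromBlocks_of_kink σ _ ia htt' (e.symm_apply_eq.2 h1) (e.symm_apply_eq.2 h2)
      (e.symm_apply_eq.2 h3) fun p hp => e.symm_apply_eq.2 (h4 p hp)
  rw [hκ, ← det_submatrix_equiv_self e, submatrix_sub, Pi.sub_apply, Pi.sub_apply, hblk, hperm,
    sub_eq_add_neg, fromBlocks_neg, fromBlocks_add,
    ← det_fromBlocks_add_single _ ia (σ ia) htt' E hdet hunit, hE]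
  congr 2 <;> abel

/-- Behaviour of `det(M − P)` under Reidemeister move I: inserting a kink at a new
crossing `c = n` of sign `s`, with the loop on side `t` and the strand at `(i,a)` passing
through the other side `t'`, multiplies the determinant by `κ`, where `κ = −x` for a
positive crossing with left loop, `κ = −1` for a positive crossing with right loop or a
negative crossing with left loop, and `κ = −x⁻¹` for a negative crossing with right loop. -/
theorem det_reidemeister_I {R : Type*} [CommRing R] (x y : Rˣ)
    (n : ℕ) (hn : 1 ≤ n) (ε : Fin n → Bool) (σ : Equiv.Perm (Fin n × Fin 2))
    (ia : Fin n × Fin 2) (s : Bool) (t t' : Fin 2) (htt' : t' ≠ t)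
    (ε' : Fin (n + 1) → Bool)
    (hε'old : ∀ i : Fin n, ε' i.castSucc = ε i)
    (hε'c : ε' (Fin.last n) = s)
    (σ' : Equiv.Perm (Fin (n + 1) × Fin 2))
    (h1 : σ' (Fin.last n, t) = (Fin.last n, t))
    (h2 : σ' (ia.1.castSucc, ia.2) = (Fin.last n, t'))
    (h3 : σ' (Fin.last n, t') = ((σ ia).1.castSucc, (σ ia).2))
    (h4 : ∀ p : Fin n × Fin 2, p ≠ ia →
      σ' (p.1.castSucc, p.2) = ((σ p).1.castSucc, (σ p).2)) :
    (blockDiag (fun i => if ε' i then Mpos x y else Mneg x y) - permMat R σ').det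
      = (if s then (if t = 0 then -(x : R) else -1)
          else (if t = 0 then -1 else -((x⁻¹ : Rˣ) : R)))
        * (blockDiag (fun i => if ε i then Mpos x y else Mneg x y) - permMat R σ).det :=
  det_reidemeister_I_general x y n ε σ ia s t t' htt' ε' hε'old hε'c σ' h1 h2 h3 h4
end
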